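/- arXiv:1702.05818 — 3 statements merged into one kernel-verified Lean document; each statement's English description precedes it below -/
import Mathlib

section
/- A Hermitian-preserving linear map Λ on M_n(ℂ) that is diagonalized by an orthogonal Hermitian basis {v_α} with real eigenvalues λ_α (i.e., Λ[v_α] = λ_α v_α) is completely positive if and only if Σ_α (λ_α / Tr(v_α†v_α)) · v̄_α ⊗ v_α ≥ 0 (positive semidefinite as an n²×n² matrix), where v̄_α denotes entrywise complex conjugation. -/
open Matrix BigOperators Kronecker
open scoped ComplexOrder

/-- Complete positivity of a linear map on `M_n(ℂ)`, characterized via Choi's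
theorem: the map is completely positive iff its Choi matrix
`(id ⊗ Λ)[Σ_{ij} e_{ij} ⊗ e_{ij}]` is positive semidefinite. -/
def IsCompletelyPositive {n : ℕ}
    (Λ : Matrix (Fin n) (Fin n) ℂ →ₗ[ℂ] Matrix (Fin n) (Fin n) ℂ) : Prop :=
  (∑ i : Fin n, ∑ j : Fin n,
    (Matrix.single i j (1 : ℂ)) ⊗ₖ Λ (Matrix.single i j 1)).PosSemidef

/-!
Expanding each matrix unit `e_{ij}` in the orthogonal eigenbasis gives
`Λ e_{ij} = Σ_α λ_α ⟨v_α, e_{ij}⟩ / ⟨v_α, v_α⟩ • v_α` with `⟨v_α, e_{ij}⟩ = conj (v_α i j)`.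
Summing `e_{ij} ⊗ Λ e_{ij}` over `i, j` reassembles the coefficients `conj (v_α i j)` into the
matrix `v̄_α`, so the Choi matrix of `Λ` is exactly `Σ_α (λ_α / Tr(v_α† v_α)) • v̄_α ⊗ v_α`.
-/

namespace Matrix

theorem trace_conjTranspose_mul_single_one {R m n : Type*} [Semiring R] [StarRing R]
    [Fintype m] [Fintype n] [DecidableEq m] [DecidableEq n] (A : Matrix m n R) (i : m) (j : n) :
    (Aᴴ * single i j (1 : R)).trace = star (A i j) := by
  simp [trace_mul_single]

theorem sum_single_one_kronecker_smul {R m n p q : Type*} [CommSemiring R]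
    [Fintype m] [Fintype n] [DecidableEq m] [DecidableEq n] (w : Matrix m n R) (u : Matrix p q R) :
    ∑ i, ∑ j, single i j (1 : R) ⊗ₖ (w i j • u) = w ⊗ₖ u := by
  ext ⟨a, b⟩ ⟨c, d⟩
  simp [Matrix.sum_apply, single_apply, ite_and]

theorem kronecker_sum {R l m n p ι : Type*} [CommSemiring R] (s : Finset ι) (A : Matrix l m R)
    (B : ι → Matrix n p R) : A ⊗ₖ ∑ i ∈ s, B i = ∑ i ∈ s, A ⊗ₖ B i :=
  map_sum (kroneckerBilinear (R := R) A) B s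

variable {𝕜 m n ι : Type*} [RCLike 𝕜] [Fintype m] [Fintype n] [Fintype ι]

theorem repr_eq_trace_div_of_orthogonal (b : Module.Basis ι 𝕜 (Matrix m n 𝕜))
    (horth : ∀ α β, α ≠ β → ((b α)ᴴ * b β).trace = 0) (X : Matrix m n 𝕜) (α : ι) :
    b.repr X α = ((b α)ᴴ * X).trace / ((b α)ᴴ * b α).trace := by
  have hnorm : ((b α)ᴴ * b α).trace ≠ 0 :=
    trace_conjTranspose_mul_self_eq_zero_iff.not.mpr (b.ne_zero α)
  rw [eq_div_iff hnorm]
  conv_rhs => rw [← b.sum_repr X]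
  simp only [Matrix.mul_sum, Matrix.mul_smul, trace_sum, trace_smul, smul_eq_mul]
  rw [Finset.sum_eq_single α (fun β _ hβ ↦ by rw [horth α β hβ.symm, mul_zero])
    (by simp)]

variable [DecidableEq m] [DecidableEq n]

theorem apply_single_one_eq_sum_of_orthogonal_eigenbasis
    (Λ : Matrix m n 𝕜 →ₗ[𝕜] Matrix m n 𝕜) (b : Module.Basis ι 𝕜 (Matrix m n 𝕜))
    (horth : ∀ α β, α ≠ β → ((b α)ᴴ * b β).trace = 0) (μ : ι → 𝕜)
    (hev : ∀ α, Λ (b α) = μ α • b α) (i : m) (j : n) :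
    Λ (single i j 1) = ∑ α, (star (b α i j) * (μ α / ((b α)ᴴ * b α).trace)) • b α := by
  conv_lhs => rw [← b.sum_repr (single i j 1)]
  simp only [map_sum, map_smul, hev, smul_smul, repr_eq_trace_div_of_orthogonal b horth,
    trace_conjTranspose_mul_single_one]
  congr! 2 with α
  ring

theorem choi_eq_sum_of_orthogonal_eigenbasis
    (Λ : Matrix m n 𝕜 →ₗ[𝕜] Matrix m n 𝕜) (b : Module.Basis ι 𝕜 (Matrix m n 𝕜))
    (horth : ∀ α β, α ≠ β → ((b α)ᴴ * b β).trace = 0) (μ : ι → 𝕜)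
    (hev : ∀ α, Λ (b α) = μ α • b α) :
    ∑ i, ∑ j, single i j (1 : 𝕜) ⊗ₖ Λ (single i j 1) =
      ∑ α, (μ α / ((b α)ᴴ * b α).trace) • ((b α).map (starRingEnd 𝕜) ⊗ₖ b α) := by
  simp only [apply_single_one_eq_sum_of_orthogonal_eigenbasis Λ b horth μ hev, kronecker_sum]
  rw [Finset.sum_congr rfl fun i _ ↦ Finset.sum_comm, Finset.sum_comm]
  refine Finset.sum_congr rfl fun α _ ↦ ?_
  rw [← smul_kronecker, ← sum_single_one_kronecker_smul]
  simp [mul_comm]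

end Matrix

theorem cp_iff_eigen_sum_posSemidef_general (n : ℕ)
    (Λ : Matrix (Fin n) (Fin n) ℂ →ₗ[ℂ] Matrix (Fin n) (Fin n) ℂ)
    (v : Fin (n ^ 2) → Matrix (Fin n) (Fin n) ℂ)
    (hli : LinearIndependent ℂ v)
    (hspan : Submodule.span ℂ (Set.range v) = ⊤)
    (horth : ∀ α β, α ≠ β → Matrix.trace ((v α)ᴴ * v β) = 0)
    (lam : Fin (n ^ 2) → ℝ)
    (hev : ∀ α, Λ (v α) = (lam α : ℂ) • v α) :
    IsCompletelyPositive Λ ↔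
      (∑ α, ((lam α : ℂ) / Matrix.trace ((v α)ᴴ * v α)) •
        ((v α).map (starRingEnd ℂ) ⊗ₖ v α)).PosSemidef := by
  set b := Module.Basis.mk hli hspan.ge
  have hb : ⇑b = v := funext (Module.Basis.mk_apply hli hspan.ge)
  rw [IsCompletelyPositive, choi_eq_sum_of_orthogonal_eigenbasis Λ b (hb ▸ horth) _ (hb ▸ hev), hb]

theorem cp_iff_eigen_sum_posSemidef (n : ℕ)
    (Λ : Matrix (Fin n) (Fin n) ℂ →ₗ[ℂ] Matrix (Fin n) (Fin n) ℂ)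
    (hherm : ∀ X : Matrix (Fin n) (Fin n) ℂ, X.IsHermitian → (Λ X).IsHermitian)
    (v : Fin (n ^ 2) → Matrix (Fin n) (Fin n) ℂ)
    (hli : LinearIndependent ℂ v)
    (hspan : Submodule.span ℂ (Set.range v) = ⊤)
    (hvherm : ∀ α, (v α).IsHermitian)
    (horth : ∀ α β, α ≠ β → Matrix.trace ((v α)ᴴ * v β) = 0)
    (lam : Fin (n ^ 2) → ℝ)
    (hev : ∀ α, Λ (v α) = (lam α : ℂ) • v α) :
    IsCompletelyPositive Λ ↔
      (∑ α, ((lam α : ℂ) / Matrix.trace ((v α)ᴴ * v α)) •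
        ((v α).map (starRingEnd ℂ) ⊗ₖ v α)).PosSemidef :=
  cp_iff_eigen_sum_posSemidef_general n Λ v hli hspan horth lam hev
end

section
/- For n = 4, let Λ_{KF}[X] = Σ_{i,j=0}^{3} p_{ij} σ_{ij} X σ_{ij} be a trace-preserving KF Gell-Mann map whose coefficients satisfy p̃_{02} = p̃_{12} and p̃_{03} = p̃_{13} ≠ p̃_{23} (where p̃_{kl} := p_{kl}+p_{lk}). Then Λ_{KF}[σ_{22}] = (1−3p̃_{02}−p̃_{03})σ_{22} + (2√3/3)(p̃_{03}−p̃_{23})(e_{33}−e_{22}); in particular, σ_{22} is not an eigenvector of Λ_{KF}. -/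
/-!
On a diagonal matrix `X = diag x`, each Gell-Mann conjugation acts as
`σ_{ij} X σ_{ij} = X σ_{ij}² + (x_j - x_i)(e_{ii} - e_{jj})`: off the diagonal `σ_{ij}` swaps
the entries `i` and `j`, and the diagonal `σ_{jj}` commute with `X`. Since every `σ_{ij}²` is
diagonal, trace preservation says exactly `Σ p_{ij} σ_{ij}² = I`, so
`Λ_{KF}[diag x] = diag x + Σ p_{ij} (x_j - x_i)(e_{ii} - e_{jj})`.
Evaluating this at `σ_{22} = diag(1, 1, -2, 0)/√3` gives the formula, and its `(3, 3)` entry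
`(2√3/3)(p̃_{03} - p̃_{23})` is nonzero while that of `σ_{22}` vanishes.
-/

open Matrix BigOperators

/-- The generalized Gell-Mann matrices on `ℂ^n`:
`gm n a b` is `σ_{ab}` (symmetric for `a < b`, antisymmetric for `a > b`,
diagonal for `a = b > 0`, identity for `a = b = 0`). -/
noncomputable def gm (n : ℕ) (a b : Fin n) : Matrix (Fin n) (Fin n) ℂ :=
  if a < b then Matrix.single a b 1 + Matrix.single b a 1
  else if b < a then (-Complex.I) • (Matrix.single b a 1 - Matrix.single a b 1)
  else if (a : ℕ) = 0 then 1
  else (Real.sqrt (2 / ((a : ℕ) * ((a : ℕ) + 1))) : ℂ) •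
    ((∑ i : Fin n, if (i : ℕ) < (a : ℕ) then Matrix.single i i 1 else 0)
      - ((a : ℕ) : ℂ) • Matrix.single a a 1)

section Single

variable {m α : Type*} [DecidableEq m]

theorem isDiag_single_self [Zero α] (i : m) (c : α) : (single i i c).IsDiag :=
  diagonal_single i c ▸ isDiag_diagonal _

variable [Fintype m] [CommSemiring α]

theorem diagonal_mul_single_self (x : m → α) (i : m) :
    diagonal x * single i i 1 = x i • single i i 1 := by
  rw [← diagonal_single, diagonal_mul_diagonal, ← diagonal_smul]
  congr 1; funext k
  by_cases hk : k = i <;> simp [hk]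

theorem trace_mul_single_mul (A B : Matrix m m α) (k : m) :
    trace (A * single k k 1 * B) = (B * A) k k := by
  rw [trace_mul_cycle, trace_mul_comm, trace_single_mul, one_smul]

end Single

section GellMann

variable {n : ℕ}

noncomputable def kfGellMannMap (p : Fin n → Fin n → ℝ) (X : Matrix (Fin n) (Fin n) ℂ) :
    Matrix (Fin n) (Fin n) ℂ :=
  ∑ i, ∑ j, (p i j : ℂ) • (gm n i j * X * gm n i j)

theorem gm_self_isDiag (a : Fin n) : (gm n a a).IsDiag := by
  simp only [gm, lt_irrefl, if_false]
  split_ifs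
  · exact isDiag_one
  · refine IsDiag.smul _ (IsDiag.sub ?_ ((isDiag_single_self a 1).smul _))
    refine Finset.sum_induction _ IsDiag (fun _ _ => IsDiag.add) isDiag_zero fun c _ => ?_
    split_ifs
    exacts [isDiag_single_self c 1, isDiag_zero]

theorem gm_mul_diagonal_mul_gm_of_ne {i j : Fin n} (h : i ≠ j) (x : Fin n → ℂ) :
    gm n i j * diagonal x * gm n i j = x j • single i i 1 + x i • single j j 1 := by
  rcases h.lt_or_gt with hij | hji
  · simp [gm, hij, add_mul, mul_add, h, h.symm, add_comm]
  · simp only [gm, hji, hji.not_gt, if_false, if_true, Matrix.smul_mul, Matrix.mul_smul, smul_smul,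
      neg_mul_neg, Complex.I_mul_I, neg_one_smul]
    simp [sub_mul, mul_sub, h, h.symm, add_comm]

theorem gm_mul_gm_of_ne {i j : Fin n} (h : i ≠ j) :
    gm n i j * gm n i j = single i i 1 + single j j 1 := by
  simpa using gm_mul_diagonal_mul_gm_of_ne h fun _ => 1

theorem gm_mul_gm_isDiag (i j : Fin n) : (gm n i j * gm n i j).IsDiag := by
  obtain rfl | h := eq_or_ne i j
  · rw [← (gm_self_isDiag i).diagonal_diag, diagonal_mul_diagonal]
    exact isDiag_diagonal _
  · rw [gm_mul_gm_of_ne h]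
    exact (isDiag_single_self i 1).add (isDiag_single_self j 1)

theorem gm_mul_diagonal_mul_gm (i j : Fin n) (x : Fin n → ℂ) :
    gm n i j * diagonal x * gm n i j =
      diagonal x * (gm n i j * gm n i j) + (x j - x i) • (single i i 1 - single j j 1) := by
  obtain rfl | h := eq_or_ne i j
  · rw [← (gm_self_isDiag i).diagonal_diag]
    simp only [diagonal_mul_diagonal, sub_self, zero_smul, add_zero]
    congr 1; funext k; ring
  · rw [gm_mul_diagonal_mul_gm_of_ne h, gm_mul_gm_of_ne h, mul_add, diagonal_mul_single_self,
      diagonal_mul_single_self]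
    module

theorem sum_smul_gm_mul_gm_eq_one (p : Fin n → Fin n → ℝ)
    (hTP : ∀ X, trace (kfGellMannMap p X) = trace X) :
    ∑ i, ∑ j, (p i j : ℂ) • (gm n i j * gm n i j) = 1 := by
  have hdiag : (∑ i, ∑ j, (p i j : ℂ) • (gm n i j * gm n i j)).IsDiag :=
    Finset.sum_induction _ IsDiag (fun _ _ => IsDiag.add) isDiag_zero fun i _ =>
      Finset.sum_induction _ IsDiag (fun _ _ => IsDiag.add) isDiag_zero fun j _ =>
        (gm_mul_gm_isDiag i j).smul _
  rw [← hdiag.diagonal_diag, ← diagonal_one]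
  congr 1; funext k
  simpa [kfGellMannMap, trace_sum, trace_smul, trace_mul_single_mul, Matrix.sum_apply]
    using hTP (single k k 1)

theorem kfGellMannMap_diagonal (p : Fin n → Fin n → ℝ)
    (hTP : ∀ X, trace (kfGellMannMap p X) = trace X) (x : Fin n → ℂ) :
    kfGellMannMap p (diagonal x) =
      diagonal x +
        ∑ i, ∑ j, ((p i j : ℂ) * (x j - x i)) • (single i i 1 - single j j 1) := by
  have hunital :
      ∑ i, ∑ j, (p i j : ℂ) • (diagonal x * (gm n i j * gm n i j)) = diagonal x := by
    simpa only [Matrix.mul_sum, Matrix.mul_smul, Matrix.mul_one] using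
      congrArg (diagonal x * ·) (sum_smul_gm_mul_gm_eq_one p hTP)
  simp only [kfGellMannMap, gm_mul_diagonal_mul_gm, smul_add, Finset.sum_add_distrib, hunital,
    mul_smul]

end GellMann

theorem gm_four_two_two :
    gm 4 2 2 = diagonal
      ![(Real.sqrt 3 : ℂ) / 3, (Real.sqrt 3 : ℂ) / 3, -2 * (Real.sqrt 3 : ℂ) / 3, 0] := by
  have h2 : ((2 : Fin 4) : ℕ) = 2 := rfl
  have hsqrt : Real.sqrt (2 / (2 * (2 + 1))) = Real.sqrt 3 / 3 := by
    rw [show (2 : ℝ) / (2 * (2 + 1)) = 3 / 3 ^ 2 by norm_num, Real.sqrt_div' _ (by norm_num),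
      Real.sqrt_sq (by norm_num)]
  simp only [gm, lt_irrefl, if_false, h2, OfNat.ofNat_ne_zero, Nat.cast_ofNat, hsqrt]
  ext a b
  fin_cases a <;> fin_cases b <;> simp [Fin.sum_univ_four]; ring

theorem kfGellMannMap_gm_four_two_two (p : Fin 4 → Fin 4 → ℝ)
    (hTP : ∀ X, trace (kfGellMannMap p X) = trace X)
    (h02 : p 0 2 + p 2 0 = p 1 2 + p 2 1) (h03 : p 0 3 + p 3 0 = p 1 3 + p 3 1) :
    kfGellMannMap p (gm 4 2 2) =
      ((1 - 3 * (p 0 2 + p 2 0) - (p 0 3 + p 3 0) : ℝ) : ℂ) • gm 4 2 2 +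
        ((2 * Real.sqrt 3 / 3 * ((p 0 3 + p 3 0) - (p 2 3 + p 3 2)) : ℝ) : ℂ) •
          (single 3 3 1 - single 2 2 1) := by
  have h02C : (p 0 2 + p 2 0 : ℂ) = p 1 2 + p 2 1 := by exact_mod_cast h02
  have h03C : (p 0 3 + p 3 0 : ℂ) = p 1 3 + p 3 1 := by exact_mod_cast h03
  rw [gm_four_two_two, kfGellMannMap_diagonal p hTP]
  ext a b
  fin_cases a <;> fin_cases b <;> simp [Fin.sum_univ_four]
  · ring
  · linear_combination (Real.sqrt 3 : ℂ) * h02C + (Real.sqrt 3 : ℂ) / 3 * h03C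
  · linear_combination -(Real.sqrt 3 : ℂ) * h02C
  · linear_combination -(Real.sqrt 3 : ℂ) / 3 * h03C

theorem KF_gellMann_four_not_EV (p : Fin 4 → Fin 4 → ℝ)
    (hTP : ∀ X : Matrix (Fin 4) (Fin 4) ℂ,
        Matrix.trace (∑ i, ∑ j, (p i j : ℂ) • (gm 4 i j * X * gm 4 i j)) = Matrix.trace X)
    (h02 : p 0 2 + p 2 0 = p 1 2 + p 2 1)
    (h03 : p 0 3 + p 3 0 = p 1 3 + p 3 1)
    (hne : p 0 3 + p 3 0 ≠ p 2 3 + p 3 2) :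
    (∑ i, ∑ j, (p i j : ℂ) • (gm 4 i j * gm 4 2 2 * gm 4 i j)) =
        ((1 - 3 * (p 0 2 + p 2 0) - (p 0 3 + p 3 0) : ℝ) : ℂ) • gm 4 2 2 +
        ((2 * Real.sqrt 3 / 3 * ((p 0 3 + p 3 0) - (p 2 3 + p 3 2)) : ℝ) : ℂ) •
          (Matrix.single 3 3 (1 : ℂ) - Matrix.single 2 2 (1 : ℂ)) ∧
    ¬ ∃ c : ℂ, (∑ i, ∑ j, (p i j : ℂ) • (gm 4 i j * gm 4 2 2 * gm 4 i j)) = c • gm 4 2 2 := by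
  have key := kfGellMannMap_gm_four_two_two p hTP h02 h03
  refine ⟨key, ?_⟩
  rintro ⟨c, hc⟩
  have h33 : (p 0 3 + p 3 0 : ℂ) = p 2 3 + p 3 2 := by
    simpa [gm_four_two_two, sub_eq_zero] using congrFun (congrFun (hc.symm.trans key) 3) 3
  exact hne (by exact_mod_cast h33)
end

section
/- Suppose nonnegative reals p̃_{kl} (0 ≤ k < l ≤ n−1) satisfy the 'column-constant' condition p̃_{jl} = p̃_{kl} =: p̃_l for all j, k < l. Then the trace-preservation recurrence p_{jj} = (j/(2(j−1)))[2Σ_{0<l<j} p_{ll}/(l(l+1)) − Σ_{l<j} p̃_{lj} − Σ_{j<l<n} p̃_{jl} + Σ_{0<l<n} p̃_{0l}] for 1 < j < n is solved by p_{kk} = p_{11} + ½(p̃_1 + Σ_{0<j<k} p̃_j − k·p̃_k). -/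
/-!
Column-constancy collapses the `p̃`-terms of the recurrence at `j` to `−j p̃_j + ∑_{0<l≤j} p̃_l`,
so only the first row `q = p̃₀` matters. The recurrence expresses `p_j` through `p_1, …, p_{j−1}`,
hence by strong induction it suffices that the closed form satisfies it. That in turn follows from
the telescoping (`1/(l(l+1)) = 1/l − 1/(l+1)`) evaluation of `∑_{0<l<k} p_l/(l(l+1))` on the
closed form.
-/

open BigOperators Finset

noncomputable def recurrenceSolution (c : ℝ) (q : ℕ → ℝ) (k : ℕ) : ℝ :=
  c + 1 / 2 * (q 1 + ∑ j ∈ Ico 1 k, q j - k * q k)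

theorem sum_Ico_recurrenceSolution_div (c : ℝ) (q : ℕ → ℝ) {k : ℕ} (hk : 1 ≤ k) :
    ∑ l ∈ Ico 1 k, recurrenceSolution c q l / (l * (l + 1))
      = (c + q 1 / 2) * (1 - 1 / k) - (∑ j ∈ Ico 1 k, q j) / (2 * k) := by
  induction k, hk using Nat.le_induction with
  | base => simp
  | succ k hk ih =>
    rw [sum_Ico_succ_top hk, ih, sum_Ico_succ_top hk, recurrenceSolution]
    have hk0 : (k : ℝ) ≠ 0 := by positivity
    field_simp
    push_cast
    ring

theorem recurrenceSolution_step (c : ℝ) (q : ℕ → ℝ) {j : ℕ} (hj : 1 < j) :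
    recurrenceSolution c q j = j / (2 * (j - 1)) *
      (2 * ∑ l ∈ Ico 1 j, recurrenceSolution c q l / (l * (l + 1))
        - j * q j + ∑ l ∈ Ico 1 (j + 1), q l) := by
  rw [sum_Ico_recurrenceSolution_div c q hj.le, sum_Ico_succ_top hj.le, recurrenceSolution]
  have hj0 : (j : ℝ) ≠ 0 := by positivity
  have hj1 : (j : ℝ) - 1 ≠ 0 := sub_ne_zero.mpr (by exact_mod_cast hj.ne')
  field_simp
  ring

theorem eq_recurrenceSolution_of_step (n : ℕ) (q p : ℕ → ℝ)
    (hstep : ∀ j, 1 < j → j < n → p j = j / (2 * (j - 1)) *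
      (2 * ∑ l ∈ Ico 1 j, p l / (l * (l + 1)) - j * q j + ∑ l ∈ Ico 1 (j + 1), q l)) :
    ∀ k, 1 ≤ k → k < n → p k = recurrenceSolution (p 1) q k := by
  intro k
  induction k using Nat.strong_induction_on with
  | _ k ih =>
    intro hk hkn
    rcases hk.eq_or_lt with rfl | hk
    · simp [recurrenceSolution]
    · have hprev : ∑ l ∈ Ico 1 k, p l / (l * (l + 1))
          = ∑ l ∈ Ico 1 k, recurrenceSolution (p 1) q l / (l * (l + 1)) :=
        sum_congr rfl fun l hl => by
          obtain ⟨hl1, hlk⟩ := mem_Ico.mp hl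
          rw [ih l hlk hl1 (hlk.trans hkn)]
      rw [hstep k hk hkn, hprev, ← recurrenceSolution_step _ _ hk]

theorem tp_sums_eq_of_column_const (n : ℕ) (pt : ℕ → ℕ → ℝ)
    (hcol : ∀ j k l, j < l → k < l → l < n → pt j l = pt k l) {j : ℕ} (hj : 0 < j) (hjn : j < n) :
    - ∑ l ∈ range j, pt l j - ∑ l ∈ Ico (j + 1) n, pt j l + ∑ l ∈ Ico 1 n, pt 0 l
      = - j * pt 0 j + ∑ l ∈ Ico 1 (j + 1), pt 0 l := by
  have hcolumn : ∑ l ∈ range j, pt l j = j * pt 0 j := by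
    rw [sum_congr rfl fun l hl => hcol l 0 j (mem_range.mp hl) hj hjn]
    simp
  have hrow : ∑ l ∈ Ico (j + 1) n, pt j l = ∑ l ∈ Ico (j + 1) n, pt 0 l :=
    sum_congr rfl fun l hl => by
      obtain ⟨hjl, hln⟩ := mem_Ico.mp hl
      exact hcol j 0 l hjl (by omega) hln
  rw [hcolumn, hrow, ← sum_Ico_consecutive _ (by omega : 1 ≤ j + 1) hjn]
  ring

theorem TP_recurrence_solution_general (n : ℕ)
    (pt : ℕ → ℕ → ℝ) (p : ℕ → ℝ)
    (hcol : ∀ j k l, j < l → k < l → l < n → pt j l = pt k l)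
    (hrec : ∀ j, 1 < j → j < n →
      p j = (j : ℝ) / (2 * ((j : ℝ) - 1)) *
        (2 * ∑ l ∈ Finset.Ico 1 j, p l / ((l : ℝ) * ((l : ℝ) + 1))
          - ∑ l ∈ Finset.range j, pt l j
          - ∑ l ∈ Finset.Ico (j + 1) n, pt j l
          + ∑ l ∈ Finset.Ico 1 n, pt 0 l)) :
    ∀ k, 1 ≤ k → k < n →
      p k = p 1 + (1 / 2) *
        (pt 0 1 + (∑ j ∈ Finset.Ico 1 k, pt 0 j) - (k : ℝ) * pt 0 k) := by
  refine eq_recurrenceSolution_of_step n (pt 0) p fun j hj hjn => ?_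
  have hsums := tp_sums_eq_of_column_const n pt hcol (by omega : 0 < j) hjn
  rw [hrec j hj hjn]
  congr 1
  linarith

theorem TP_recurrence_solution (n : ℕ) (hn : 3 ≤ n)
    (pt : ℕ → ℕ → ℝ) (p : ℕ → ℝ)
    (hnonneg : ∀ k l, k < l → l < n → 0 ≤ pt k l)
    (hcol : ∀ j k l, j < l → k < l → l < n → pt j l = pt k l)
    (hrec : ∀ j, 1 < j → j < n →
      p j = (j : ℝ) / (2 * ((j : ℝ) - 1)) *
        (2 * ∑ l ∈ Finset.Ico 1 j, p l / ((l : ℝ) * ((l : ℝ) + 1))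
          - ∑ l ∈ Finset.range j, pt l j
          - ∑ l ∈ Finset.Ico (j + 1) n, pt j l
          + ∑ l ∈ Finset.Ico 1 n, pt 0 l)) :
    ∀ k, 1 ≤ k → k < n →
      p k = p 1 + (1 / 2) *
        (pt 0 1 + (∑ j ∈ Finset.Ico 1 k, pt 0 j) - (k : ℝ) * pt 0 k) :=
  TP_recurrence_solution_general n pt p hcol hrec
end
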